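/- arXiv:1108.3588 — 4 statements merged into one kernel-verified Lean document; each statement's English description precedes it below -/
import Mathlib

section
/- Let A be the 2n×2n integer block matrix A = [[0, B],[Bᵀ, 0]], where 0 denotes the n×n zero matrix. There exists a signing vector s on {1,…,2n} with s_i·(A⁻¹)_{i,j}·s_j = |(A⁻¹)_{i,j}| for all i, j if and only if there exists a signing vector t on {1,…,n} with t_i·(B⁻¹)_{i,j}·t_j = |(B⁻¹)_{i,j}| for all i, j. -/
/-!
`A⁻¹ = [[0, B⁻¹ᵀ], [B⁻¹, 0]]`, and `B⁻¹` is again upper unitriangular. A signing of this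
bipartite block matrix is a pair of signings of the two copies of the index set; the diagonal
entries `B⁻¹ i i = 1 > 0` force both copies of each index to carry the same sign, so it is the
same thing as a single signing of `B⁻¹`.
-/

open Matrix

namespace Matrix

variable {m R : Type*}

/-- `M` is signable when `D * M * D = |M|` entrywise for some diagonal `±1` matrix `D = diag s`. -/
def IsSignable [Ring R] [LinearOrder R] (M : Matrix m m R) : Prop :=
  ∃ s : m → R, (∀ i, s i = 1 ∨ s i = -1) ∧ ∀ i j, s i * M i j * s j = |M i j|

section Triangular

variable [Fintype m] [LinearOrder m]

theorem BlockTriangular.mul_apply_self [NonUnitalNonAssocSemiring R] {M N : Matrix m m R}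
    (hM : M.BlockTriangular id) (hN : N.BlockTriangular id) (i : m) :
    (M * N) i i = M i i * N i i := by
  rw [mul_apply, Finset.sum_eq_single i]
  · intro k _ hki
    rcases lt_or_gt_of_ne hki with hk | hk
    · rw [hM hk, zero_mul]
    · rw [hN hk, mul_zero]
  · exact fun hi => absurd (Finset.mem_univ i) hi

theorem BlockTriangular.apply_self_mul_inv_apply_self [CommRing R] {M : Matrix m m R}
    (hM : M.BlockTriangular id) (hdet : IsUnit M.det) (i : m) :
    M i i * M⁻¹ i i = 1 := by
  have : Invertible M := M.invertibleOfIsUnitDet hdet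
  rw [← hM.mul_apply_self (blockTriangular_inv_of_blockTriangular hM), mul_nonsing_inv M hdet,
    one_apply_eq]

end Triangular

theorem inv_fromBlocks_zero_zero [Fintype m] [DecidableEq m] [CommRing R] {B C : Matrix m m R}
    (hB : IsUnit B.det) (hC : IsUnit C.det) :
    (fromBlocks 0 B C 0)⁻¹ = fromBlocks 0 C⁻¹ B⁻¹ 0 := by
  apply inv_eq_right_inv
  simp [fromBlocks_multiply, mul_nonsing_inv B hB, mul_nonsing_inv C hC, fromBlocks_one]

theorem isSignable_fromBlocks_zero_transpose_zero_iff [CommRing R] [LinearOrder R]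
    [IsStrictOrderedRing R] {C : Matrix m m R} (hC : ∀ i, 0 < C i i) :
    IsSignable (fromBlocks 0 Cᵀ C 0) ↔ IsSignable C := by
  constructor
  · rintro ⟨s, hs, hsC⟩
    have hsame : ∀ i, s (Sum.inr i) = s (Sum.inl i) := by
      intro i
      have hii : s (Sum.inr i) * C i i * s (Sum.inl i) = C i i := by
        simpa [abs_of_pos (hC i)] using hsC (Sum.inr i) (Sum.inl i)
      have hprod : s (Sum.inr i) * s (Sum.inl i) = 1 := by
        have : (s (Sum.inr i) * s (Sum.inl i) - 1) * C i i = 0 := by linear_combination hii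
        simpa [sub_eq_zero, (hC i).ne'] using this
      rcases hs (Sum.inl i) with h | h <;> rcases hs (Sum.inr i) with h' | h' <;>
        simp only [h, h'] at hprod ⊢ <;> norm_num at hprod
    refine ⟨fun i => s (Sum.inl i), fun i => hs _, fun i j => ?_⟩
    simpa [hsame i] using hsC (Sum.inr i) (Sum.inl j)
  · rintro ⟨t, ht, htC⟩
    refine ⟨Sum.elim t t, fun i => by cases i <;> exact ht _, ?_⟩
    rintro (i | i) (j | j)
    · simp
    · simpa [mul_comm, mul_left_comm] using htC j i
    · simpa using htC i j
    · simp

end Matrix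

theorem stmt1_general {n : ℕ} (B : Matrix (Fin n) (Fin n) ℤ)
    (h1 : ∀ i, B i i = 1) (h2 : ∀ i j : Fin n, j < i → B i j = 0)
    (A : Matrix (Fin n ⊕ Fin n) (Fin n ⊕ Fin n) ℤ)
    (hA : A = Matrix.fromBlocks 0 B Bᵀ 0) :
    (∃ s : Fin n ⊕ Fin n → ℤ, (∀ i, s i = 1 ∨ s i = -1) ∧
        ∀ i j, s i * A⁻¹ i j * s j = |A⁻¹ i j|) ↔
      (∃ t : Fin n → ℤ, (∀ i, t i = 1 ∨ t i = -1) ∧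
        ∀ i j, t i * B⁻¹ i j * t j = |B⁻¹ i j|) := by
  have hB : B.BlockTriangular id := h2
  have hdet : IsUnit B.det := by simp [det_of_isUpperTriangular hB, h1]
  have hdiag : ∀ i, B⁻¹ i i = 1 := fun i => by
    simpa [h1] using hB.apply_self_mul_inv_apply_self hdet i
  have hAinv : A⁻¹ = fromBlocks 0 B⁻¹ᵀ B⁻¹ 0 := by
    rw [hA, inv_fromBlocks_zero_zero hdet (by rwa [det_transpose]), transpose_nonsing_inv]
  change IsSignable A⁻¹ ↔ IsSignable B⁻¹
  rw [hAinv]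
  exact isSignable_fromBlocks_zero_transpose_zero_iff fun i => by simp [hdiag]

/-- For `B` an `n × n` upper uni-triangular integer matrix and
`A = [[0, B], [Bᵀ, 0]]`, there is a signing vector `s` on the `2n` indices with
`s i * A⁻¹ i j * s j = |A⁻¹ i j|` for all `i, j` iff there is a signing vector `t`
on the `n` indices with `t i * B⁻¹ i j * t j = |B⁻¹ i j|` for all `i, j`. -/
theorem stmt1 {n : ℕ} (hn : 1 ≤ n) (B : Matrix (Fin n) (Fin n) ℤ)
    (h1 : ∀ i, B i i = 1) (h2 : ∀ i j : Fin n, j < i → B i j = 0)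
    (A : Matrix (Fin n ⊕ Fin n) (Fin n ⊕ Fin n) ℤ)
    (hA : A = Matrix.fromBlocks 0 B Bᵀ 0) :
    (∃ s : Fin n ⊕ Fin n → ℤ, (∀ i, s i = 1 ∨ s i = -1) ∧
        ∀ i j, s i * A⁻¹ i j * s j = |A⁻¹ i j|) ↔
      (∃ t : Fin n → ℤ, (∀ i, t i = 1 ∨ t i = -1) ∧
        ∀ i j, t i * B⁻¹ i j * t j = |B⁻¹ i j|) :=
  stmt1_general B h1 h2 A hA
end

section
/- Suppose there is a signing vector s with s_i·(A⁻¹)_{i,j}·s_j = |(A⁻¹)_{i,j}| for all i, j. Then the entrywise absolute value |A⁻¹| is an invertible matrix, and the entrywise absolute value of its inverse equals A, i.e. |(|A⁻¹|)⁻¹| = A. -/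
/-!
If `s` is a signing vector with `D = diagonal s`, then `D * D = 1`, so conjugation by `D` is an
involutive automorphism of the matrix algebra that only changes signs of entries. The hypothesis
says `|A⁻¹| = D A⁻¹ D`; hence `|A⁻¹|` is invertible with inverse `D A D`, whose entrywise absolute
value is `|A| = A`.
-/

open Matrix

variable {ι K : Type*} [Fintype ι] [DecidableEq ι]

section CommRing

variable [CommRing K] {s : ι → K}

lemma diagonal_mul_diagonal_self_eq_one (hs : ∀ i, s i * s i = 1) :
    diagonal s * diagonal s = 1 := by
  rw [diagonal_mul_diagonal, ← diagonal_one]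
  exact congrArg diagonal (funext hs)

lemma diagonal_conj_apply (s : ι → K) (M : Matrix ι ι K) (i j : ι) :
    (diagonal s * M * diagonal s) i j = s i * M i j * s j := by
  rw [mul_diagonal, diagonal_mul]

lemma isUnit_diagonal_conj (hs : ∀ i, s i * s i = 1) {M : Matrix ι ι K} (hM : IsUnit M) :
    IsUnit (diagonal s * M * diagonal s) := by
  have hD : IsUnit (diagonal s) :=
    IsUnit.of_mul_eq_one _ (diagonal_mul_diagonal_self_eq_one hs)
  exact (hD.mul hM).mul hD

lemma inv_diagonal_conj (hs : ∀ i, s i * s i = 1) (M : Matrix ι ι K) :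
    (diagonal s * M * diagonal s)⁻¹ = diagonal s * M⁻¹ * diagonal s := by
  have hD : (diagonal s)⁻¹ = diagonal s := inv_eq_left_inv (diagonal_mul_diagonal_self_eq_one hs)
  rw [Matrix.mul_inv_rev, Matrix.mul_inv_rev, hD, mul_assoc]

end CommRing

section LinearOrderedField

variable [Field K] [LinearOrder K] [IsStrictOrderedRing K] {s : ι → K}

lemma map_abs_diagonal_conj (hs : ∀ i, s i = 1 ∨ s i = -1) (M : Matrix ι ι K) :
    (diagonal s * M * diagonal s).map abs = M.map abs := by
  have habs : ∀ i, |s i| = 1 := fun i => by rcases hs i with h | h <;> simp [h]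
  ext i j
  rw [map_apply, map_apply, diagonal_conj_apply, abs_mul, abs_mul, habs, habs, one_mul, mul_one]

theorem isUnit_map_abs_and_map_abs_inv_of_sign_conj {M : Matrix ι ι K} (hM : IsUnit M)
    (hs : ∀ i, s i = 1 ∨ s i = -1) (hsign : ∀ i j, s i * M i j * s j = |M i j|) :
    IsUnit (M.map abs) ∧ (M.map abs)⁻¹.map abs = M⁻¹.map abs := by
  have hss : ∀ i, s i * s i = 1 := fun i => by rcases hs i with h | h <;> simp [h]
  have hconj : M.map abs = diagonal s * M * diagonal s := by
    ext i j
    rw [map_apply, diagonal_conj_apply, hsign]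
  rw [hconj, inv_diagonal_conj hss, map_abs_diagonal_conj hs]
  exact ⟨isUnit_diagonal_conj hss hM, rfl⟩

end LinearOrderedField

/-- Let `A` be an invertible `n × n` rational matrix with nonnegative
entries.  If there is a signing vector `s` with `s i * A⁻¹ i j * s j = |A⁻¹ i j|`
for all `i, j`, then the entrywise absolute value `|A⁻¹|` is an invertible matrix and
the entrywise absolute value of its inverse equals `A`, i.e. `|(|A⁻¹|)⁻¹| = A`. -/
theorem stmt2 {n : ℕ} (A : Matrix (Fin n) (Fin n) ℚ)
    (hA : IsUnit A) (hpos : ∀ i j, 0 ≤ A i j)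
    (s : Fin n → ℚ) (hs : ∀ i, s i = 1 ∨ s i = -1)
    (hsign : ∀ i j, s i * A⁻¹ i j * s j = |A⁻¹ i j|) :
    IsUnit (A⁻¹.map (fun x => |x|)) ∧
      ((A⁻¹.map (fun x => |x|))⁻¹).map (fun x => |x|) = A := by
  obtain ⟨hunit, habs⟩ :=
    isUnit_map_abs_and_map_abs_inv_of_sign_conj (isUnit_nonsing_inv_iff.mpr hA) hs hsign
  refine ⟨hunit, ?_⟩
  rw [habs, nonsing_inv_nonsing_inv A ((isUnit_iff_isUnit_det A).mp hA)]
  ext i j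
  exact abs_of_nonneg (hpos i j)
end

section
/- Suppose Γ_D is bipartite and i < j < k are vertices such that there is a directed path from i to j (some ((B−I)^m)_{i,j} ≠ 0 with m ≥ 1) and a directed path from j to k (some ((B−I)^m)_{j,k} ≠ 0 with m ≥ 1). Then ⟨i,j⟩·⟨j,k⟩ = ⟨i,k⟩. -/
/-!
Let `A = B - 1`, whose `m`-th power counts directed paths of length `m`. If a longest path
from `a` to `b` has length `L ≥ 2` and starts with the edge `a → v`, then superadditivity of
longest-path lengths along concatenation forces `ℓ(a,v) = 1` and `ℓ(v,b) = L - 1`, i.e.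
`{a, v}` is an edge of `Γ_D`. Inducting on `L`, the parity of `ℓ(a,b)` records whether
`a` and `b` receive the same colour in a 2-colouring of `Γ_D`, and parities of colour
changes compose along `i, j, k`.
-/

open Matrix

/-- A square integer matrix `M` is *signable* if there is a signing vector `s`
(valued in `{+1, -1}`) with `s i * M i j * s j = |M i j|` for all `i, j`. -/
def IsSignable {k : ℕ} (M : Matrix (Fin k) (Fin k) ℤ) : Prop :=
  ∃ s : Fin k → ℤ, (∀ i, s i = 1 ∨ s i = -1) ∧ ∀ i j, s i * M i j * s j = |M i j|

/-- `{i, j}` is an edge of the maximal-path subgraph `Γ_D` of the digraph `D` with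
adjacency matrix `B - 1`: there is an edge from `i` to `j` and no directed path
of length `≥ 2` from `i` to `j`. -/
def GammaEdge {k : ℕ} (B : Matrix (Fin k) (Fin k) ℤ) (i j : Fin k) : Prop :=
  i < j ∧ 1 ≤ B i j ∧ ∀ m : ℕ, 2 ≤ m → ((B - 1) ^ m) i j = 0

/-- The maximal-path subgraph `Γ_D` is bipartite. -/
def GammaBipartite {k : ℕ} (B : Matrix (Fin k) (Fin k) ℤ) : Prop :=
  ∃ c : Fin k → Bool, ∀ i j : Fin k, GammaEdge B i j → c i ≠ c j

open Classical in
/-- The pairing `⟨i,j⟩`: it is `1` on the diagonal, `(-1)^ℓ(i,j)` where `ℓ(i,j)` is the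
length of a longest directed path from `i` to `j` when such a path exists, and `0`
otherwise. -/
noncomputable def pairing {k : ℕ} (B : Matrix (Fin k) (Fin k) ℤ) (i j : Fin k) : ℤ :=
  if i = j then 1
  else if ∃ m : ℕ, 1 ≤ m ∧ ((B - 1) ^ m) i j ≠ 0 then
    (-1 : ℤ) ^ sSup {m : ℕ | 1 ≤ m ∧ ((B - 1) ^ m) i j ≠ 0}
  else 0

/-- `B⁽ᵛ⁾`: the matrix obtained from `B` by replacing every off-diagonal entry in row
`v` and in column `v` by `0` (deleting the vertex `v` from the digraph). -/
def vertexDelete {k : ℕ} (B : Matrix (Fin k) (Fin k) ℤ) (v : Fin k) :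
    Matrix (Fin k) (Fin k) ℤ :=
  Matrix.of fun i j => if i ≠ j ∧ (i = v ∨ j = v) then 0 else B i j

/-- `(i,j)` is a zero pair: no directed path from `i` to `j`. -/
def ZeroPair {k : ℕ} (B : Matrix (Fin k) (Fin k) ℤ) (i j : Fin k) : Prop :=
  ∀ m : ℕ, 1 ≤ m → ((B - 1) ^ m) i j = 0

/-- `(i,j)` is a unit pair: all directed paths from `i` to `j` have length one. -/
def UnitPair {k : ℕ} (B : Matrix (Fin k) (Fin k) ℤ) (i j : Fin k) : Prop :=
  1 ≤ B i j ∧ ∀ m : ℕ, 2 ≤ m → ((B - 1) ^ m) i j = 0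

/-- `(i,j)` is a composite pair: every directed path from `i` to `j` passes through
some fixed intermediate vertex `v`. -/
def CompositePair {k : ℕ} (B : Matrix (Fin k) (Fin k) ℤ) (i j : Fin k) : Prop :=
  ∃ v : Fin k, i < v ∧ v < j ∧ ∀ m : ℕ, 1 ≤ m → ((vertexDelete B v - 1) ^ m) i j = 0

/-- `(i,j)` is a prime pair: `i < j` and `(i,j)` is neither a zero pair, a unit pair,
nor a composite pair. -/
def PrimePair {k : ℕ} (B : Matrix (Fin k) (Fin k) ℤ) (i j : Fin k) : Prop :=
  i < j ∧ ¬ZeroPair B i j ∧ ¬UnitPair B i j ∧ ¬CompositePair B i j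

namespace Matrix

variable {n : ℕ} {R : Type*} [Semiring R] {A : Matrix (Fin n) (Fin n) R}

def HasPath (A : Matrix (Fin n) (Fin n) R) (i j : Fin n) : Prop :=
  ∃ m : ℕ, 1 ≤ m ∧ (A ^ m) i j ≠ 0

noncomputable def longestPath (A : Matrix (Fin n) (Fin n) R) (i j : Fin n) : ℕ :=
  sSup {m : ℕ | 1 ≤ m ∧ (A ^ m) i j ≠ 0}

lemma exists_apply_ne_zero_of_pow_succ_apply_ne_zero {m : ℕ} {i j : Fin n}
    (h : (A ^ (m + 1)) i j ≠ 0) : ∃ v, A i v ≠ 0 ∧ (A ^ m) v j ≠ 0 := by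
  rw [pow_succ', mul_apply] at h
  obtain ⟨v, -, hv⟩ := Finset.exists_ne_zero_of_sum_ne_zero h
  exact ⟨v, left_ne_zero_of_mul hv, right_ne_zero_of_mul hv⟩

lemma val_add_le_of_pow_apply_ne_zero (hA : ∀ i j, A i j ≠ 0 → i < j) {m : ℕ} {i j : Fin n}
    (h : (A ^ m) i j ≠ 0) : (i : ℕ) + m ≤ j := by
  induction m generalizing i with
  | zero =>
    by_cases hij : i = j
    · simp [hij]
    · simp [hij] at h
  | succ m ih =>
    obtain ⟨v, hiv, hvj⟩ := exists_apply_ne_zero_of_pow_succ_apply_ne_zero h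
    have := Fin.lt_def.mp (hA i v hiv)
    have := ih hvj
    omega

lemma bddAbove_pathLengths (hA : ∀ i j, A i j ≠ 0 → i < j) (i j : Fin n) :
    BddAbove {m : ℕ | 1 ≤ m ∧ (A ^ m) i j ≠ 0} :=
  ⟨j, fun m hm => by have := val_add_le_of_pow_apply_ne_zero hA hm.2; omega⟩

lemma le_longestPath (hA : ∀ i j, A i j ≠ 0 → i < j) {m : ℕ} {i j : Fin n}
    (hm : 1 ≤ m) (h : (A ^ m) i j ≠ 0) : m ≤ longestPath A i j :=
  le_csSup (bddAbove_pathLengths hA i j) ⟨hm, h⟩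

lemma HasPath.longestPath_spec (hA : ∀ i j, A i j ≠ 0 → i < j) {i j : Fin n}
    (h : HasPath A i j) : 1 ≤ longestPath A i j ∧ (A ^ longestPath A i j) i j ≠ 0 :=
  Nat.sSup_mem h (bddAbove_pathLengths hA i j)

variable [PartialOrder R] [IsStrictOrderedRing R]

lemma pow_add_apply_ne_zero (hA : ∀ i j, 0 ≤ A i j) {p q : ℕ} {a v b : Fin n}
    (hp : (A ^ p) a v ≠ 0) (hq : (A ^ q) v b ≠ 0) : (A ^ (p + q)) a b ≠ 0 := by
  have hterm : 0 < (A ^ p) a v * (A ^ q) v b :=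
    mul_pos ((pow_apply_nonneg hA p a v).lt_of_ne' hp) ((pow_apply_nonneg hA q v b).lt_of_ne' hq)
  rw [pow_add, mul_apply]
  refine (hterm.trans_le (Finset.single_le_sum (f := fun w => (A ^ p) a w * (A ^ q) w b)
    (fun w _ => ?_) (Finset.mem_univ v))).ne'
  exact mul_nonneg (pow_apply_nonneg hA p a w) (pow_apply_nonneg hA q w b)

lemma HasPath.trans (hA : ∀ i j, 0 ≤ A i j) {a v b : Fin n}
    (hav : HasPath A a v) (hvb : HasPath A v b) : HasPath A a b := by
  obtain ⟨p, hp1, hp⟩ := hav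
  obtain ⟨q, -, hq⟩ := hvb
  exact ⟨p + q, by omega, pow_add_apply_ne_zero hA hp hq⟩

lemma longestPath_add_le (hA : ∀ i j, 0 ≤ A i j) (hA_lt : ∀ i j, A i j ≠ 0 → i < j)
    {a v b : Fin n} (hav : HasPath A a v) (hvb : HasPath A v b) :
    longestPath A a v + longestPath A v b ≤ longestPath A a b := by
  obtain ⟨hp1, hp⟩ := hav.longestPath_spec hA_lt
  obtain ⟨-, hq⟩ := hvb.longestPath_spec hA_lt
  exact le_longestPath hA_lt (by omega) (pow_add_apply_ne_zero hA hp hq)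

lemma even_longestPath_iff (hA : ∀ i j, 0 ≤ A i j) (hA_lt : ∀ i j, A i j ≠ 0 → i < j)
    (c : Fin n → Bool) (hc : ∀ a b, HasPath A a b → longestPath A a b = 1 → c a ≠ c b)
    {a b : Fin n} (h : HasPath A a b) : Even (longestPath A a b) ↔ c a = c b := by
  obtain ⟨hL1, hL⟩ := h.longestPath_spec hA_lt
  generalize hL_def : longestPath A a b = L at hL1 hL
  induction L generalizing a b with
  | zero => omega
  | succ m ih =>
    obtain rfl | hm := Nat.eq_zero_or_pos m
    · simpa using hc a b h hL_def
    obtain ⟨v, hav, hvb⟩ := exists_apply_ne_zero_of_pow_succ_apply_ne_zero hL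
    have hpav : HasPath A a v := ⟨1, le_rfl, by rwa [pow_one]⟩
    have hpvb : HasPath A v b := ⟨m, hm, hvb⟩
    have hsum := longestPath_add_le hA hA_lt hpav hpvb
    have hav1 := (hpav.longestPath_spec hA_lt).1
    have hvbm := le_longestPath hA_lt hm hvb
    have hcav := hc a v hpav (by omega)
    have hvbL : longestPath A v b = m := by omega
    rw [Nat.even_add_one, ih hpvb hvbL hm hvb]
    revert hcav
    cases c a <;> cases c v <;> cases c b <;> decide

end Matrix

section Unitriangular

variable {n : ℕ} {B : Matrix (Fin n) (Fin n) ℤ}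

lemma sub_one_apply_of_ne {i j : Fin n} (h : i ≠ j) : (B - 1) i j = B i j := by
  simp [Matrix.sub_apply, one_apply, h]

lemma lt_of_sub_one_apply_ne_zero (h1 : ∀ i, B i i = 1) (h2 : ∀ i j : Fin n, j < i → B i j = 0)
    (i j : Fin n) (h : (B - 1) i j ≠ 0) : i < j := by
  rcases lt_trichotomy i j with hij | rfl | hji
  · exact hij
  · simp [Matrix.sub_apply, h1] at h
  · rw [sub_one_apply_of_ne hji.ne', h2 i j hji] at h
    exact absurd rfl h

lemma sub_one_apply_nonneg (h1 : ∀ i, B i i = 1) (h2 : ∀ i j : Fin n, j < i → B i j = 0)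
    (h3 : ∀ i j : Fin n, i < j → 0 ≤ B i j) (i j : Fin n) : 0 ≤ (B - 1) i j := by
  by_cases h : (B - 1) i j = 0
  · exact h.ge
  · have hij := lt_of_sub_one_apply_ne_zero h1 h2 i j h
    rw [sub_one_apply_of_ne hij.ne]
    exact h3 i j hij

lemma gammaEdge_of_longestPath_eq_one (h1 : ∀ i, B i i = 1)
    (h2 : ∀ i j : Fin n, j < i → B i j = 0) (h3 : ∀ i j : Fin n, i < j → 0 ≤ B i j)
    {a b : Fin n} (h : HasPath (B - 1) a b) (hL : longestPath (B - 1) a b = 1) :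
    GammaEdge B a b := by
  have hA_lt := lt_of_sub_one_apply_ne_zero h1 h2
  have hedge := (h.longestPath_spec hA_lt).2
  rw [hL, pow_one] at hedge
  have hab := hA_lt a b hedge
  refine ⟨hab, ?_, fun m hm => ?_⟩
  · have := sub_one_apply_nonneg h1 h2 h3 a b
    rw [sub_one_apply_of_ne hab.ne] at hedge this
    omega
  · by_contra hne
    have := le_longestPath hA_lt (by omega) hne
    omega

lemma pairing_of_hasPath {i j : Fin n} (hne : i ≠ j) (h : HasPath (B - 1) i j) :
    pairing B i j = (-1) ^ longestPath (B - 1) i j := by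
  rw [pairing, if_neg hne]
  exact if_pos h

end Unitriangular

theorem stmt4_general {n : ℕ} (B : Matrix (Fin n) (Fin n) ℤ)
    (h1 : ∀ i, B i i = 1) (h2 : ∀ i j : Fin n, j < i → B i j = 0)
    (h3 : ∀ i j : Fin n, i < j → 0 ≤ B i j)
    (hbip : GammaBipartite B)
    (i j k : Fin n) (hij : i < j) (hjk : j < k)
    (hpij : ∃ m : ℕ, 1 ≤ m ∧ ((B - 1) ^ m) i j ≠ 0)
    (hpjk : ∃ m : ℕ, 1 ≤ m ∧ ((B - 1) ^ m) j k ≠ 0) :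
    pairing B i j * pairing B j k = pairing B i k := by
  obtain ⟨c, hc⟩ := hbip
  have hA := sub_one_apply_nonneg h1 h2 h3
  have hpik : HasPath (B - 1) i k := HasPath.trans hA hpij hpjk
  have hparity {a b : Fin n} (h : HasPath (B - 1) a b) :
      Even (longestPath (B - 1) a b) ↔ c a = c b :=
    even_longestPath_iff hA (lt_of_sub_one_apply_ne_zero h1 h2) c
      (fun a b hab hL => hc a b (gammaEdge_of_longestPath_eq_one h1 h2 h3 hab hL)) h
  rw [pairing_of_hasPath hij.ne hpij, pairing_of_hasPath hjk.ne hpjk,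
    pairing_of_hasPath (hij.trans hjk).ne hpik, ← pow_add]
  refine neg_one_pow_congr ?_
  rw [Nat.even_add, hparity hpij, hparity hpjk, hparity hpik]
  cases c i <;> cases c j <;> cases c k <;> decide

/-- If `Γ_D` is bipartite and `i < j < k` are vertices with a directed
path from `i` to `j` and a directed path from `j` to `k`, then
`⟨i,j⟩ * ⟨j,k⟩ = ⟨i,k⟩`. -/
theorem stmt4 {n : ℕ} (hn : 1 ≤ n) (B : Matrix (Fin n) (Fin n) ℤ)
    (h1 : ∀ i, B i i = 1) (h2 : ∀ i j : Fin n, j < i → B i j = 0)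
    (h3 : ∀ i j : Fin n, i < j → 0 ≤ B i j)
    (hbip : GammaBipartite B)
    (i j k : Fin n) (hij : i < j) (hjk : j < k)
    (hpij : ∃ m : ℕ, 1 ≤ m ∧ ((B - 1) ^ m) i j ≠ 0)
    (hpjk : ∃ m : ℕ, 1 ≤ m ∧ ((B - 1) ^ m) j k ≠ 0) :
    pairing B i j * pairing B j k = pairing B i k :=
  stmt4_general B h1 h2 h3 hbip i j k hij hjk hpij hpjk
end

section
/- For all vertices i < k < j, one has (B⁻¹)_{i,j} = (B⁻¹)_{i,k}·(B⁻¹)_{k,j} + ((B⁽ᵏ⁾)⁻¹)_{i,j}. -/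
/-!
Write `B' = B⁽ᵏ⁾`. The resolvent identity gives `B⁻¹ - B'⁻¹ = B⁻¹ (B' - B) B'⁻¹`, where `B' - B`
vanishes outside row and column `k`. Row `k` of `B'⁻¹` is the unit row `e_k`, so for `j ≠ k`
column `j` of `(B' - B) B'⁻¹` is supported on row `k`: column `j` of `B⁻¹ - B'⁻¹` is a multiple
`c` of column `k` of `B⁻¹`. Reading this at row `k`, where `B⁻¹ k k = 1` and `B'⁻¹ k j = 0`,
shows `c = B⁻¹ k j`.
-/

open Matrix

namespace Matrix

theorem BlockTriangular.det_eq_one {ι R : Type*} [Fintype ι] [LinearOrder ι] [CommRing R]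
    {M : Matrix ι ι R} (hM : M.BlockTriangular id) (hdiag : ∀ i, M i i = 1) : M.det = 1 := by
  simp [det_of_isUpperTriangular hM, hdiag]

theorem BlockTriangular.inv_apply_self {ι R : Type*} [Fintype ι] [LinearOrder ι] [CommRing R]
    {M : Matrix ι ι R} (hM : M.BlockTriangular id) (hdiag : ∀ i, M i i = 1) (k : ι) :
    M⁻¹ k k = 1 := by
  have hdet : IsUnit M.det := by rw [hM.det_eq_one hdiag]; exact isUnit_one
  let _ : Invertible M := M.invertibleOfIsUnitDet hdet
  have hMinv : M⁻¹.BlockTriangular id := blockTriangular_inv_of_blockTriangular hM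
  have hkk := congrFun (congrFun (M.mul_nonsing_inv hdet) k) k
  rw [mul_apply, Finset.sum_eq_single k, hdiag, one_mul, one_apply_eq] at hkk
  · exact hkk
  · intro l _ hl
    rcases lt_or_gt_of_ne hl with h | h
    · rw [hM h, zero_mul]
    · rw [hMinv h, mul_zero]
  · exact fun h => (h (Finset.mem_univ k)).elim

end Matrix

section VertexDelete

variable {n : ℕ} {B : Matrix (Fin n) (Fin n) ℤ} {k : Fin n}

theorem vertexDelete_apply_self (a : Fin n) : vertexDelete B k a a = B a a := by
  simp [vertexDelete]

theorem vertexDelete_apply_of_ne_of_ne {a b : Fin n} (ha : a ≠ k) (hb : b ≠ k) :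
    vertexDelete B k a b = B a b := by
  simp [vertexDelete, ha, hb]

theorem vertexDelete_apply_self_left (hkk : B k k = 1) (l : Fin n) :
    vertexDelete B k k l = (1 : Matrix (Fin n) (Fin n) ℤ) k l := by
  by_cases h : k = l
  · subst h; simp [vertexDelete, hkk]
  · simp [vertexDelete, h]

theorem Matrix.BlockTriangular.vertexDelete (hB : B.BlockTriangular id) :
    (vertexDelete B k).BlockTriangular id := by
  intro a b h
  simp only [_root_.vertexDelete, of_apply]
  split_ifs
  · rfl
  · exact hB h

theorem vertexDelete_mul_apply_self_left (hkk : B k k = 1) (N : Matrix (Fin n) (Fin n) ℤ)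
    (l : Fin n) : (vertexDelete B k * N) k l = N k l := by
  simp only [mul_apply, vertexDelete_apply_self_left hkk]
  rw [← mul_apply, one_mul]

theorem inv_vertexDelete_apply_self_left (hkk : B k k = 1)
    (hdet : IsUnit (vertexDelete B k).det) (l : Fin n) :
    (vertexDelete B k)⁻¹ k l = (1 : Matrix (Fin n) (Fin n) ℤ) k l := by
  rw [← vertexDelete_mul_apply_self_left hkk (vertexDelete B k)⁻¹, mul_nonsing_inv _ hdet]

theorem vertexDelete_sub_mul_inv_apply_of_ne (hkk : B k k = 1)
    (hdet : IsUnit (vertexDelete B k).det) {l j : Fin n} (hl : l ≠ k) (hj : j ≠ k) :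
    ((vertexDelete B k - B) * (vertexDelete B k)⁻¹) l j = 0 := by
  rw [mul_apply]
  refine Finset.sum_eq_zero fun m _ => ?_
  by_cases hm : m = k
  · rw [hm, inv_vertexDelete_apply_self_left hkk hdet, one_apply_ne hj.symm, mul_zero]
  · rw [Matrix.sub_apply, vertexDelete_apply_of_ne_of_ne hl hm, sub_self, zero_mul]

theorem inv_apply_eq_inv_mul_inv_add_inv_vertexDelete (hdet : IsUnit B.det)
    (hdet' : IsUnit (vertexDelete B k).det) (hkk : B k k = 1) (hinvkk : B⁻¹ k k = 1)
    {j : Fin n} (hj : j ≠ k) (a : Fin n) :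
    B⁻¹ a j = B⁻¹ a k * B⁻¹ k j + (vertexDelete B k)⁻¹ a j := by
  set c := ((vertexDelete B k - B) * (vertexDelete B k)⁻¹) k j
  have hunit : IsUnit B ↔ IsUnit (vertexDelete B k) := by
    simp only [isUnit_iff_isUnit_det, hdet, hdet']
  have hcol : ∀ a', B⁻¹ a' j - (vertexDelete B k)⁻¹ a' j = B⁻¹ a' k * c := by
    intro a'
    rw [← Matrix.sub_apply, inv_sub_inv hunit, Matrix.mul_assoc, mul_apply, Finset.sum_eq_single k]
    · intro l _ hl
      rw [vertexDelete_sub_mul_inv_apply_of_ne hkk hdet' hl hj, mul_zero]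
    · exact fun h => (h (Finset.mem_univ k)).elim
  have hc : c = B⁻¹ k j := by
    have := hcol k
    rwa [inv_vertexDelete_apply_self_left hkk hdet', one_apply_ne hj.symm, hinvkk, sub_zero,
      one_mul, eq_comm] at this
  linear_combination hcol a + B⁻¹ a k * hc

end VertexDelete

theorem stmt10_general {n : ℕ} (B : Matrix (Fin n) (Fin n) ℤ)
    (h1 : ∀ i, B i i = 1) (h2 : ∀ i j : Fin n, j < i → B i j = 0)
    (i k j : Fin n) (hkj : k < j) :
    B⁻¹ i j = B⁻¹ i k * B⁻¹ k j + (vertexDelete B k)⁻¹ i j := by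
  have hB : B.BlockTriangular id := h2
  have hB' : (vertexDelete B k).BlockTriangular id := hB.vertexDelete
  have hdet : IsUnit B.det := by rw [hB.det_eq_one h1]; exact isUnit_one
  have hdet' : IsUnit (vertexDelete B k).det := by
    rw [hB'.det_eq_one fun a => (vertexDelete_apply_self a).trans (h1 a)]; exact isUnit_one
  exact inv_apply_eq_inv_mul_inv_add_inv_vertexDelete hdet hdet' (h1 k)
    (hB.inv_apply_self h1 k) hkj.ne' i

/-- For all vertices `i < k < j`,
`(B⁻¹) i j = (B⁻¹) i k * (B⁻¹) k j + ((B⁽ᵏ⁾)⁻¹) i j`. -/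
theorem stmt10 {n : ℕ} (hn : 1 ≤ n) (B : Matrix (Fin n) (Fin n) ℤ)
    (h1 : ∀ i, B i i = 1) (h2 : ∀ i j : Fin n, j < i → B i j = 0)
    (h3 : ∀ i j : Fin n, i < j → 0 ≤ B i j)
    (i k j : Fin n) (hik : i < k) (hkj : k < j) :
    B⁻¹ i j = B⁻¹ i k * B⁻¹ k j + (vertexDelete B k)⁻¹ i j :=
  stmt10_general B h1 h2 i k j hkj
end
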